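/- Let w = w[1]⋯w[n] ∈ {0,1,2}^* with k = |w|_2 occurrences of the symbol 2, and let x = w^r. Then (T_{w[n]} ∘ ⋯ ∘ T_{w[1]}) applied to the vector |p0,0⟩ + |p1,0⟩ − |p2,0⟩ equals |p0,0⟩ + |p1,−k⟩ − |p2,−k⟩ + Σ_{i=1}^{n} (−1)^{x[i]} ( −(1/2)|p3,i−k⟩ + (1/2)|p4,i−k⟩ ), where (−1)^{x[i]} is +1 if x[i] ∈ {0,2} and −1 if x[i] = 1. -/

import Mathlib

/-- The five affine states `p0, …, p4`. -/
inductive St : Type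
  | p0 | p1 | p2 | p3 | p4
  deriving DecidableEq

/-- The real vector space of finitely supported functions from `St × ℤ` to `ℝ`. -/
abbrev V : Type := (St × ℤ) →₀ ℝ

/-- The basis vector `|p,c⟩`. -/
noncomputable def ket (p : St) (c : ℤ) : V := Finsupp.single (p, c) 1

/-- Action of `T_0` on basis vectors. -/
noncomputable def img0 : St × ℤ → V
  | (.p0, c) => ket .p0 c
  | (.p1, c) => ket .p1 c - (1 / 2 : ℝ) • ket .p3 (c + 1) + (1 / 2 : ℝ) • ket .p4 (c + 1)
  | (.p2, c) => ket .p2 c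
  | (.p3, c) => ket .p3 (c + 1)
  | (.p4, c) => ket .p4 (c + 1)

/-- Action of `T_1` on basis vectors. -/
noncomputable def img1 : St × ℤ → V
  | (.p0, c) => ket .p0 c
  | (.p1, c) => ket .p1 c + (1 / 2 : ℝ) • ket .p3 (c + 1) - (1 / 2 : ℝ) • ket .p4 (c + 1)
  | (.p2, c) => ket .p2 c
  | (.p3, c) => ket .p3 (c + 1)
  | (.p4, c) => ket .p4 (c + 1)

/-- Action of `T_2` on basis vectors. -/
noncomputable def img2 : St × ℤ → V
  | (.p0, c) => ket .p0 c
  | (.p1, c) => ket .p1 (c - 1) - (1 / 2 : ℝ) • ket .p3 c + (1 / 2 : ℝ) • ket .p4 c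
  | (.p2, c) => ket .p2 (c - 1)
  | (.p3, c) => ket .p3 c
  | (.p4, c) => ket .p4 c

/-- Action of the end-marker map `T_$` on basis vectors. -/
noncomputable def imgD : St × ℤ → V
  | (.p0, c) => if c = 0 then (1 / 2 : ℝ) • ket .p3 0 + (1 / 2 : ℝ) • ket .p4 0 else ket .p0 c
  | (.p1, c) => ket .p1 c
  | (.p2, c) => ket .p1 c
  | (.p3, c) => ket .p3 c
  | (.p4, c) => if c = 0 then ket .p4 0 else ket .p3 c

/-- The linear map `T_0`. -/
noncomputable def T0 : V →ₗ[ℝ] V :=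
  Finsupp.lsum ℝ fun pc => LinearMap.toSpanSingleton ℝ V (img0 pc)

/-- The linear map `T_1`. -/
noncomputable def T1 : V →ₗ[ℝ] V :=
  Finsupp.lsum ℝ fun pc => LinearMap.toSpanSingleton ℝ V (img1 pc)

/-- The linear map `T_2`. -/
noncomputable def T2 : V →ₗ[ℝ] V :=
  Finsupp.lsum ℝ fun pc => LinearMap.toSpanSingleton ℝ V (img2 pc)

/-- The end-marker linear map `T_$`. -/
noncomputable def TD : V →ₗ[ℝ] V :=
  Finsupp.lsum ℝ fun pc => LinearMap.toSpanSingleton ℝ V (imgD pc)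

/-- The transition map associated to an input symbol in `{0,1,2}`. -/
noncomputable def Tsym (σ : Fin 3) : V →ₗ[ℝ] V :=
  if σ = 0 then T0 else if σ = 1 then T1 else T2

/-- `run w v = (T_{w[n]} ∘ ⋯ ∘ T_{w[1]}) v`. -/
noncomputable def run (w : List (Fin 3)) (v : V) : V :=
  w.foldl (fun v σ => Tsym σ v) v

/-! Every `T_σ` fixes `|p0,c⟩`, moves the counter of `p1, p2` down by `d = [σ = 2]`, translates
`u_c := ketDiff34 c = -(1/2)|p3,c⟩ + (1/2)|p4,c⟩` to `u_{c+1-d}`, and lets `|p1,c⟩` emit the new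
term `±u_{c+1-d}`, with sign `-` exactly for `σ = 1`. So the letter read `j` steps before the end has
had its term translated `j` more times, which is why the sum is indexed by the reversed word. -/

lemma lsum_toSpanSingleton_ket (f : St × ℤ → V) (p : St) (c : ℤ) :
    Finsupp.lsum ℝ (fun pc => LinearMap.toSpanSingleton ℝ V (f pc)) (ket p c) = f (p, c) := by
  simp [ket]

lemma T0_ket (p : St) (c : ℤ) : T0 (ket p c) = img0 (p, c) := lsum_toSpanSingleton_ket img0 p c

lemma T1_ket (p : St) (c : ℤ) : T1 (ket p c) = img1 (p, c) := lsum_toSpanSingleton_ket img1 p c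

lemma T2_ket (p : St) (c : ℤ) : T2 (ket p c) = img2 (p, c) := lsum_toSpanSingleton_ket img2 p c

noncomputable def ketDiff34 (c : ℤ) : V :=
  (-(1 / 2 : ℝ)) • ket .p3 c + (1 / 2 : ℝ) • ket .p4 c

def symSign (σ : Fin 3) : ℝ := if σ = 1 then -1 else 1

def counterDrop (σ : Fin 3) : ℤ := if σ = 2 then 1 else 0

section Tsym

variable (σ : Fin 3) (c : ℤ)

lemma Tsym_ket_p0 : Tsym σ (ket .p0 c) = ket .p0 c := by
  fin_cases σ <;> simp [Tsym, T0_ket, T1_ket, T2_ket, img0, img1, img2]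

lemma Tsym_ket_p2 : Tsym σ (ket .p2 c) = ket .p2 (c - counterDrop σ) := by
  fin_cases σ <;> simp [Tsym, T0_ket, T1_ket, T2_ket, img0, img1, img2, counterDrop]

lemma Tsym_ket_p1 :
    Tsym σ (ket .p1 c) =
      ket .p1 (c - counterDrop σ) + symSign σ • ketDiff34 (c + 1 - counterDrop σ) := by
  fin_cases σ <;>
    simp [Tsym, T0_ket, T1_ket, T2_ket, img0, img1, img2, counterDrop, symSign,
      ketDiff34] <;> module

lemma Tsym_ketDiff34 : Tsym σ (ketDiff34 c) = ketDiff34 (c + 1 - counterDrop σ) := by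
  fin_cases σ <;>
    simp [Tsym, T0_ket, T1_ket, T2_ket, img0, img1, img2, counterDrop, ketDiff34]

end Tsym

lemma run_append_singleton (w : List (Fin 3)) (σ : Fin 3) (v : V) :
    run (w ++ [σ]) v = Tsym σ (run w v) := by
  simp [run]

lemma count_two_append_singleton (w : List (Fin 3)) (σ : Fin 3) :
    ((w ++ [σ]).count 2 : ℤ) = w.count 2 + counterDrop σ := by
  fin_cases σ <;> simp [counterDrop]

theorem stmt_12 (w : List (Fin 3)) :
    run w (ket .p0 0 + ket .p1 0 - ket .p2 0) =
      ket .p0 0 + ket .p1 (-(w.count 2 : ℤ)) - ket .p2 (-(w.count 2 : ℤ)) +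
        ∑ i ∈ Finset.range w.length,
          (if w.reverse.getD i 0 = 1 then (-1 : ℝ) else 1) •
            ((-(1 / 2 : ℝ)) • ket .p3 ((i : ℤ) + 1 - (w.count 2 : ℤ)) +
              (1 / 2 : ℝ) • ket .p4 ((i : ℤ) + 1 - (w.count 2 : ℤ))) := by
  change _ = _ + ∑ i ∈ _, symSign (w.reverse.getD i 0) • ketDiff34 ((i : ℤ) + 1 - w.count 2)
  induction w using List.reverseRecOn with
  | nil => simp [run]
  | append_singleton w σ ih =>
    rw [run_append_singleton, ih, count_two_append_singleton, List.length_append,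
      List.length_singleton, Finset.sum_range_succ']
    simp only [map_add, map_sub, map_sum, map_smul, Tsym_ket_p0, Tsym_ket_p1, Tsym_ket_p2,
      Tsym_ketDiff34, List.reverse_append, List.reverse_singleton, List.singleton_append,
      List.getD_cons_succ, List.getD_cons_zero]
    push_cast
    ring_nf
    abel
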